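/- Let F be a field, ℱ ⊆ [m]×[n] an m×n Ferrers diagram, δ ∈ {1,...,n}, and C ⊆ F^{m×n} a subspace all of whose matrices have support contained in ℱ and all of whose nonzero matrices have rank at least δ. Then dim C ≤ ν_min(ℱ;δ) = min_{0≤j≤δ−1} Σ_{t=1}^{n−δ+1+j} max{c_t − j, 0}, where c_t is the number of points of ℱ in column t. -/
import Mathlib

section EtzionSilbersteinAux
open Finset

lemma ES_card_filter_lt {m k : ℕ} (hk : k ≤ m) :
    (Finset.univ.filter (fun i : Fin m => (i : ℕ) < k)).card = k := by
  have : (Finset.univ.filter (fun i : Fin m => (i : ℕ) < k))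
      = Finset.univ.map (Fin.castLEEmb hk) := by
    ext i
    simp only [mem_filter, mem_univ, true_and, mem_map, Fin.castLEEmb_apply]
    constructor
    · intro h; exact ⟨⟨i, h⟩, rfl⟩
    · rintro ⟨a, rfl⟩; simp
  rw [this, card_map, card_univ, Fintype.card_fin]

lemma ES_down_mem {m : ℕ} (A : Finset (Fin m))
    (hA : ∀ i ∈ A, ∀ i' : Fin m, i' ≤ i → i' ∈ A) (i : Fin m) :
    i ∈ A ↔ (i : ℕ) < A.card := by
  constructor
  · intro hi
    have hsub : (Finset.univ.filter (fun i' : Fin m => (i' : ℕ) < (i : ℕ) + 1)) ⊆ A := by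
      intro i' h
      exact hA i hi i' (by have := (mem_filter.mp h).2; omega)
    have := Finset.card_le_card hsub
    rwa [ES_card_filter_lt (by omega : (i : ℕ) + 1 ≤ m)] at this
  · intro hi
    by_contra h
    have hsub : A ⊆ Finset.univ.filter (fun i' : Fin m => (i' : ℕ) < (i : ℕ)) := by
      intro a ha
      simp only [mem_filter, mem_univ, true_and]
      by_contra hc
      exact h (hA a ha i (by omega))
    have := Finset.card_le_card hsub
    rw [ES_card_filter_lt (i.isLt.le)] at this
    omega

lemma ES_card_filter_between {m c j : ℕ} (hc : c ≤ m) :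
    (Finset.univ.filter (fun i : Fin m => (i : ℕ) < c ∧ j ≤ (i : ℕ))).card = c - j := by
  have h1 : (Finset.univ.filter (fun i : Fin m => (i : ℕ) < c ∧ j ≤ (i : ℕ)))
      = (Finset.univ.filter (fun i : Fin m => (i : ℕ) < c)).filter (fun i : Fin m => ¬ (i : ℕ) < j) := by
    rw [filter_filter]; apply filter_congr; intro i _; exact ⟨fun h => by omega, fun h => by omega⟩
  have h2 : (Finset.univ.filter (fun i : Fin m => (i : ℕ) < c)).filter (fun i : Fin m => (i : ℕ) < j)
      = Finset.univ.filter (fun i : Fin m => (i : ℕ) < min c j) := by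
    rw [filter_filter]; apply filter_congr; intro i _; exact ⟨fun h => by omega, fun h => by omega⟩
  have key := Finset.card_filter_add_card_filter_not
    (s := Finset.univ.filter (fun i : Fin m => (i : ℕ) < c)) (p := fun i : Fin m => (i : ℕ) < j)
  rw [h2, ES_card_filter_lt hc, ES_card_filter_lt (le_trans (min_le_left _ _) hc)] at key
  rw [h1]
  omega

lemma ES_rank_le {F : Type*} [Field F] {m n : ℕ} (M : Matrix (Fin m) (Fin n) F) (j cut : ℕ)
    (h : ∀ i : Fin m, j ≤ (i : ℕ) → ∀ t : Fin n, (t : ℕ) < cut → M i t = 0) :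
    M.rank ≤ j + (n - cut) := by
  classical
  set S₁ : Finset (Fin n → F) :=
    (Finset.univ.filter (fun i : Fin m => (i : ℕ) < j)).image (fun i => M i) with hS₁
  set S₂ : Finset (Fin n → F) :=
    (Finset.univ.filter (fun t : Fin n => ¬ (t : ℕ) < cut)).image
      (fun t => Pi.single t (1 : F)) with hS₂
  have hspan : Submodule.span F (Set.range M) ≤ Submodule.span F ((S₁ ∪ S₂ : Finset _) : Set (Fin n → F)) := by
    rw [Submodule.span_le]
    rintro _ ⟨i, rfl⟩
    by_cases hi : (i : ℕ) < j
    · apply Submodule.subset_span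
      simp only [coe_union, Set.mem_union]
      exact Or.inl (by simp only [hS₁, coe_image, Set.mem_image, mem_coe, mem_filter,
        mem_univ, true_and]; exact ⟨i, hi, rfl⟩)
    · have hrow : M i = ∑ t ∈ Finset.univ.filter (fun t : Fin n => ¬ (t : ℕ) < cut),
          M i t • (Pi.single t (1 : F) : Fin n → F) := by
        funext t'
        rw [Finset.sum_apply]
        by_cases ht' : (t' : ℕ) < cut
        · rw [h i (le_of_not_gt hi) t' ht']
          apply (Finset.sum_eq_zero ?_).symm
          intro t ht
          have htt : t' ≠ t := by
            rintro rfl; exact (mem_filter.mp ht).2 ht'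
          simp [Pi.single_apply, htt]
        · rw [Finset.sum_eq_single t']
          · simp [Pi.single_apply]
          · intro t ht htne
            simp [Pi.single_apply, (Ne.symm htne : t' ≠ t)]
          · intro hmem
            exact absurd (by simp only [mem_filter, mem_univ, true_and]; exact ht') hmem
      rw [hrow]
      apply Submodule.sum_mem
      intro t ht
      apply Submodule.smul_mem
      apply Submodule.subset_span
      simp only [coe_union, Set.mem_union]
      exact Or.inr (by simp only [hS₂, coe_image, Set.mem_image, mem_coe]; exact ⟨t, ht, rfl⟩)
  have h1 : M.rank ≤ (S₁ ∪ S₂).card := by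
    rw [Matrix.rank_eq_finrank_span_row]
    calc Module.finrank F (Submodule.span F (Set.range M))
        ≤ Module.finrank F (Submodule.span F ((S₁ ∪ S₂ : Finset _) : Set (Fin n → F))) :=
          Submodule.finrank_mono hspan
      _ ≤ (S₁ ∪ S₂).card := finrank_span_finset_le_card _
  have hc1 : S₁.card ≤ j := by
    calc S₁.card ≤ (Finset.univ.filter (fun i : Fin m => (i : ℕ) < j)).card :=
          Finset.card_image_le
      _ ≤ (Finset.range j).card := Finset.card_le_card_of_injOn Fin.val
          (fun a ha => by simpa using (mem_filter.mp ha).2) (fun a _ b _ hab => Fin.val_injective hab)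
      _ = j := Finset.card_range j
  have hc2 : S₂.card ≤ n - cut := by
    have key := Finset.card_filter_add_card_filter_not
      (s := (Finset.univ : Finset (Fin n))) (p := fun t : Fin n => (t : ℕ) < cut)
    have hmin : (Finset.univ.filter (fun t : Fin n => (t : ℕ) < cut))
        = Finset.univ.filter (fun t : Fin n => (t : ℕ) < min cut n) := by
      apply filter_congr; intro t _; exact ⟨fun h => by omega, fun h => by omega⟩
    rw [hmin, ES_card_filter_lt (min_le_right _ _), card_univ, Fintype.card_fin] at key
    calc S₂.card ≤ (Finset.univ.filter (fun t : Fin n => ¬ (t : ℕ) < cut)).card :=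
          Finset.card_image_le
      _ ≤ n - cut := by omega
  calc M.rank ≤ (S₁ ∪ S₂).card := h1
    _ ≤ S₁.card + S₂.card := Finset.card_union_le _ _
    _ ≤ j + (n - cut) := add_le_add hc1 hc2

lemma ES_col_card {m n : ℕ} (ℱ : Finset (Fin m × Fin n))
    (htop : ∀ p ∈ ℱ, ∀ i' : Fin m, i' ≤ p.1 → (i', p.2) ∈ ℱ) (j : ℕ) (t : Fin n) :
    (ℱ.filter (fun p => p.2 = t ∧ j ≤ (p.1 : ℕ))).card
      = (ℱ.filter (fun p => p.2 = t)).card - j := by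
  classical
  set A : Finset (Fin m) := Finset.univ.filter (fun i => (i, t) ∈ ℱ) with hA
  have hAdown : ∀ i ∈ A, ∀ i' : Fin m, i' ≤ i → i' ∈ A := by
    intro i hi i' hle
    simp only [hA, mem_filter, mem_univ, true_and] at hi ⊢
    exact htop (i, t) hi i' hle
  have himg : ∀ (P : Fin m → Prop) [DecidablePred P],
      ℱ.filter (fun p => p.2 = t ∧ P p.1) = (A.filter P).image (fun i => (i, t)) := by
    intro P _
    ext p
    simp only [mem_filter, mem_image, hA, mem_univ, true_and]
    constructor
    · rintro ⟨hp, rfl, hP⟩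
      exact ⟨p.1, ⟨hp, hP⟩, rfl⟩
    · rintro ⟨i, ⟨hiF, hiP⟩, rfl⟩
      exact ⟨hiF, rfl, hiP⟩
  have hinj : Function.Injective (fun i : Fin m => (i, t)) := fun a b hab => by
    simpa using congrArg Prod.fst hab
  have hcardA : (ℱ.filter (fun p => p.2 = t)).card = A.card := by
    have := himg (fun _ => True)
    simp only [and_true, filter_true_of_mem (fun _ _ => trivial)] at this
    rw [this, Finset.card_image_of_injective _ hinj]
  have hAeq : A = Finset.univ.filter (fun i : Fin m => (i : ℕ) < A.card) := by
    ext i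
    rw [ES_down_mem A hAdown i]
    simp
  rw [himg (fun i => j ≤ (i : ℕ)), Finset.card_image_of_injective _ hinj, hcardA]
  conv_lhs => rw [hAeq]
  rw [filter_filter]
  have : (Finset.univ.filter (fun i : Fin m => (i : ℕ) < A.card ∧ j ≤ (i : ℕ))).card
      = A.card - j := ES_card_filter_between (by
        simpa using Finset.card_le_card (Finset.subset_univ A))
  exact this

end EtzionSilbersteinAux

/-- Etzion–Silberstein bound: if every matrix of a subspace `C ⊆ F^{m×n}` is
supported on the Ferrers diagram `ℱ` and every nonzero matrix in `C` has rank at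
least `δ`, then `dim C ≤ ν_min(ℱ;δ) = min_{0≤j≤δ−1} Σ_{t < n−δ+1+j} (c_t ∸ j)`,
where `c_t` is the number of points of `ℱ` in column `t`. -/
theorem stmt15 {F : Type*} [Field F] {m n δ : ℕ} (hδ1 : 1 ≤ δ) (hδn : δ ≤ n)
    (ℱ : Finset (Fin m × Fin n))
    (hright : ∀ p ∈ ℱ, ∀ j' : Fin n, p.2 ≤ j' → (p.1, j') ∈ ℱ)
    (htop : ∀ p ∈ ℱ, ∀ i' : Fin m, i' ≤ p.1 → (i', p.2) ∈ ℱ)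
    (C : Submodule F (Matrix (Fin m) (Fin n) F))
    (hsupp : ∀ M ∈ C, ∀ i j, M i j ≠ 0 → (i, j) ∈ ℱ)
    (hrank : ∀ M ∈ C, M ≠ 0 → δ ≤ M.rank) :
    Module.finrank F ↥C ≤
      (Finset.range δ).inf' (Finset.nonempty_range_iff.mpr (by omega))
        (fun j => ∑ t ∈ Finset.univ.filter (fun t : Fin n => (t : ℕ) < n - δ + 1 + j),
          ((ℱ.filter fun p => p.2 = t).card - j)) := by
  classical
  apply Finset.le_inf'
  intro j hj
  rw [Finset.mem_range] at hj
  set cut := n - δ + 1 + j with hcut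
  set S : Finset (Fin m × Fin n) :=
    ℱ.filter (fun p => j ≤ (p.1 : ℕ) ∧ (p.2 : ℕ) < cut) with hS
  let φ : C →ₗ[F] ({p // p ∈ S} → F) :=
    { toFun := fun M p => (M : Matrix (Fin m) (Fin n) F) p.1.1 p.1.2
      map_add' := fun M N => rfl
      map_smul' := fun c M => rfl }
  have hinj : Function.Injective φ := by
    rw [injective_iff_map_eq_zero]
    intro M hM0
    by_contra hMne
    have hne : (M : Matrix (Fin m) (Fin n) F) ≠ 0 := by
      intro h; exact hMne (Subtype.ext h)
    have hrk := hrank M.1 M.2 hne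
    have hzero : ∀ i : Fin m, j ≤ (i : ℕ) → ∀ t : Fin n, (t : ℕ) < cut →
        (M : Matrix (Fin m) (Fin n) F) i t = 0 := by
      intro i hi t ht
      by_contra hMit
      have hmemS : (i, t) ∈ S :=
        Finset.mem_filter.mpr ⟨hsupp M.1 M.2 i t hMit, hi, ht⟩
      exact hMit (congrFun hM0 ⟨(i, t), hmemS⟩)
    have hr := ES_rank_le (M : Matrix (Fin m) (Fin n) F) j cut hzero
    omega
  have hfin : Module.finrank F ↥C ≤ S.card := by
    have h := LinearMap.finrank_le_finrank_of_injective hinj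
    rwa [Module.finrank_pi, Fintype.card_coe] at h
  have hcount : S.card = ∑ t ∈ Finset.univ.filter (fun t : Fin n => (t : ℕ) < cut),
      ((ℱ.filter fun p => p.2 = t).card - j) := by
    rw [Finset.card_eq_sum_card_fiberwise
      (f := Prod.snd) (t := Finset.univ.filter (fun t : Fin n => (t : ℕ) < cut))
      (fun p hp => Finset.mem_filter.mpr ⟨Finset.mem_univ _, (Finset.mem_filter.mp hp).2.2⟩)]
    apply Finset.sum_congr rfl
    intro t ht
    rw [← ES_col_card ℱ htop j t]
    congr 1
    ext p
    simp only [hS, Finset.mem_filter, Finset.mem_univ, true_and] at ht ⊢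
    constructor
    · rintro ⟨⟨hpF, hj', hcut'⟩, rfl⟩
      exact ⟨hpF, rfl, hj'⟩
    · rintro ⟨hpF, rfl, hj'⟩
      exact ⟨⟨hpF, hj', ht⟩, rfl⟩
  exact hfin.trans_eq hcount
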